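/- arXiv:1905.00456 — 2 statements merged into one kernel-verified Lean document; each statement's English description precedes it below -/
import Mathlib

section
/- Let P and P* be the TPMs of a finite DTMC and its embedded DTMC related by P* = Diag(SL)(P − Diag(PSL)) with Diag(SL)Diag(PSL) + I = Diag(SL). If ψ* satisfies ψ*P* = ψ* then the vector v = ψ*·Diag(SL) satisfies vP = v. Consequently, the steady-state PMF ψ of the DTMC satisfies ψ(s) = ψ*(s)·SL(s) / Σ_{s̃} ψ*(s̃)·SL(s̃) for all states s. -/
/-- If `P* = Diag(SL)(P − Diag(PSL))` with `Diag(SL)Diag(PSL) + I = Diag(SL)`,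
and `ψ* P* = ψ*`, then `v = ψ* Diag(SL)` satisfies `v P = v`; consequently the
normalized vector `ψ(s) = ψ*(s)SL(s)/Σ ψ*(s̃)SL(s̃)` is a stochastic left
fixed vector of `P`, i.e. the steady-state PMF of the DTMC. -/
theorem stmt_11 {S : Type*} [Fintype S] [DecidableEq S]
    (P Pstar : Matrix S S ℝ) (PSL SL : S → ℝ) (ψstar : S → ℝ)
    (hP : Pstar = Matrix.diagonal SL * (P - Matrix.diagonal PSL))
    (hDiag : Matrix.diagonal SL * Matrix.diagonal PSL + 1 = Matrix.diagonal SL)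
    (hψ : Matrix.vecMul ψstar Pstar = ψstar)
    (hsum : ∑ s, ψstar s * SL s ≠ 0) :
    Matrix.vecMul (Matrix.vecMul ψstar (Matrix.diagonal SL)) P
      = Matrix.vecMul ψstar (Matrix.diagonal SL) ∧
    (Matrix.vecMul (fun s => ψstar s * SL s / ∑ t, ψstar t * SL t) P
      = fun s => ψstar s * SL s / ∑ t, ψstar t * SL t) ∧
    ∑ s, ψstar s * SL s / ∑ t, ψstar t * SL t = 1 := by
  set v := Matrix.vecMul ψstar (Matrix.diagonal SL) with hv
  have h1 : Matrix.vecMul v P = v := by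
    have h2 : Matrix.vecMul v (P - Matrix.diagonal PSL) = ψstar := by
      rw [hv, Matrix.vecMul_vecMul, ← hP, hψ]
    have h3 : Matrix.vecMul v (Matrix.diagonal PSL) = v - ψstar := by
      rw [hv, Matrix.vecMul_vecMul]
      have := congrArg (Matrix.vecMul ψstar) hDiag
      rw [Matrix.vecMul_add, Matrix.vecMul_one] at this
      linear_combination this
    rw [Matrix.vecMul_sub, h3] at h2
    linear_combination h2
  have hvs : ∀ s, v s = ψstar s * SL s := fun s => by
    simp [hv, Matrix.vecMul_diagonal]
  refine ⟨h1, ?_, ?_⟩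
  · have : (fun s => ψstar s * SL s / ∑ t, ψstar t * SL t)
        = (∑ t, ψstar t * SL t)⁻¹ • v := by
      funext s; simp [hvs, div_eq_inv_mul, mul_comm]
    rw [this, Matrix.smul_vecMul, h1]
  · rw [← Finset.sum_div, div_self hsum]
end

section
/- Let the TPM P of a finite DTMC be decomposed in block form P = [[C, D],[E, F]], where the first block of indices corresponds to vanishing states and the second to tangible states. Suppose I − C is invertible with inverse G, and define P◇ = F + E·G·D. If ψ = (ψ_V, ψ_T) satisfies ψP = ψ, then ψ_V = ψ_T·E·G and ψ_T·P◇ = ψ_T. Consequently the normalized vector ψ◇ = ψ_T/(ψ_T·1ᵀ) is a stochastic left fixed vector of P◇. -/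
/-- Block-decomposed DTMC with vanishing states `V` and tangible states `T`:
if `(1 − C)G = G(1 − C) = 1` and `(ψ_V, ψ_T)` is a left fixed vector of
`P = [[C, D],[E, F]]`, then `ψ_V = ψ_T E G`, `ψ_T` is a left fixed vector of
`P◇ = F + E G D`, and the normalized vector `ψ_T/(ψ_T 1ᵀ)` is a stochastic
left fixed vector of `P◇`. -/
theorem stmt_15 {V T : Type*} [Fintype V] [Fintype T] [DecidableEq V] [DecidableEq T]
    (C : Matrix V V ℝ) (D : Matrix V T ℝ) (E : Matrix T V ℝ) (F : Matrix T T ℝ)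
    (G : Matrix V V ℝ) (hG1 : (1 - C) * G = 1) (hG2 : G * (1 - C) = 1)
    (ψV : V → ℝ) (ψT : T → ℝ)
    (hfix1 : Matrix.vecMul ψV C + Matrix.vecMul ψT E = ψV)
    (hfix2 : Matrix.vecMul ψV D + Matrix.vecMul ψT F = ψT)
    (hsum : ∑ t, ψT t ≠ 0) :
    ψV = Matrix.vecMul (Matrix.vecMul ψT E) G ∧
    Matrix.vecMul ψT (F + E * G * D) = ψT ∧
    (Matrix.vecMul (fun t => ψT t / ∑ u, ψT u) (F + E * G * D)
      = fun t => ψT t / ∑ u, ψT u) ∧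
    ∑ t, ψT t / ∑ u, ψT u = 1 := by
  have h1 : Matrix.vecMul ψV (1 - C) = Matrix.vecMul ψT E := by
    rw [Matrix.vecMul_sub, Matrix.vecMul_one, sub_eq_iff_eq_add]
    conv_lhs => rw [← hfix1]
    abel
  have hV : ψV = Matrix.vecMul (Matrix.vecMul ψT E) G := by
    calc ψV = Matrix.vecMul ψV ((1 - C) * G) := by rw [hG1, Matrix.vecMul_one]
    _ = Matrix.vecMul (Matrix.vecMul ψV (1 - C)) G := by rw [Matrix.vecMul_vecMul]
    _ = Matrix.vecMul (Matrix.vecMul ψT E) G := by rw [h1]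
  have hT : Matrix.vecMul ψT (F + E * G * D) = ψT := by
    rw [Matrix.vecMul_add, ← Matrix.vecMul_vecMul, ← Matrix.vecMul_vecMul, ← hV, add_comm, hfix2]
  refine ⟨hV, hT, ?_, ?_⟩
  · have : (fun t => ψT t / ∑ u, ψT u) = (∑ u, ψT u)⁻¹ • ψT := by
      funext t; simp [div_eq_inv_mul, mul_comm]
    rw [this, Matrix.smul_vecMul, hT]
  · rw [← Finset.sum_div, div_self hsum]
end
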